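/- For every n > 1, the shortest expression of height at most 2 representing n has exactly p₁ + p₂ + … + p_k ones, where p₁·p₂·…·p_k is the prime factorization of n (with multiplicity); i.e., the minimal number of ones among height-≤2 expressions for n equals the sum of the prime factors of n counted with multiplicity. -/
import Mathlib


/-- `CanRepr n k` : `n` can be written as an expression in `1, +, ·` using `k` ones. -/
inductive CanRepr : ℕ → ℕ → Prop
  | one : CanRepr 1 1
  | add {a b j k : ℕ} : CanRepr a j → CanRepr b k → CanRepr (a + b) (j + k)
  | mul {a b j k : ℕ} : CanRepr a j → CanRepr b k → CanRepr (a * b) (j + k)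

/-- Integer complexity `‖n‖`: least number of ones in an expression for `n`. -/
noncomputable def cpx (n : ℕ) : ℕ := sInf {k | CanRepr n k}

/-- Expressions over `{1, +, ·}`. -/
inductive Expr : Type
  | one : Expr
  | add : Expr → Expr → Expr
  | mul : Expr → Expr → Expr

namespace Expr

/-- Value of an expression. -/
def val : Expr → ℕ
  | one => 1
  | add a b => a.val + b.val
  | mul a b => a.val * b.val

/-- Number of ones in an expression. -/
def ones : Expr → ℕ
  | one => 1
  | add a b => a.ones + b.ones
  | mul a b => a.ones + b.ones

mutual
/-- Height of the subtree, assuming the parent node is an addition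
(so a top-level addition is merged with the parent). -/
def heightA : Expr → ℕ
  | one => 0
  | add a b => max (heightA a) (heightA b)
  | mul a b => 1 + max (heightM a) (heightM b)
/-- Height of the subtree, assuming the parent node is a multiplication. -/
def heightM : Expr → ℕ
  | one => 0
  | add a b => 1 + max (heightA a) (heightA b)
  | mul a b => max (heightM a) (heightM b)
end

/-- Height of an expression, where adjacent identical (variadic) operations
are merged into a single node. -/
def height : Expr → ℕ
  | one => 0
  | add a b => 1 + max (heightA a) (heightA b)
  | mul a b => 1 + max (heightM a) (heightM b)

end Expr

/-- The rank of `n`: minimal height among shortest expressions for `n`. -/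
noncomputable def rank (n : ℕ) : ℕ :=
  sInf {h | ∃ t : Expr, t.val = n ∧ t.ones = cpx n ∧ t.height = h}

/-! ### Auxiliary material -/

/-- Sum of prime factors with multiplicity. -/
def S (n : ℕ) : ℕ := n.factorization.sum (fun p e => p * e)

lemma S_one : S 1 = 0 := by simp [S]

lemma S_prime {p : ℕ} (hp : p.Prime) : S p = p := by
  simp [S, hp.factorization]

lemma S_mul {a b : ℕ} (ha : a ≠ 0) (hb : b ≠ 0) : S (a * b) = S a + S b := by
  unfold S
  rw [Nat.factorization_mul ha hb, Finsupp.sum_add_index']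
  · intro p; exact mul_zero p
  · intro p e₁ e₂; exact mul_add p e₁ e₂

lemma S_le (n : ℕ) (hn : 1 ≤ n) : S n ≤ n := by
  induction n using Nat.strong_induction_on with
  | _ n ih =>
    rcases eq_or_lt_of_le hn with h1 | h2
    · simp [← h1, S_one]
    · have hp : n.minFac.Prime := Nat.minFac_prime (by omega)
      have hd : n.minFac ∣ n := Nat.minFac_dvd n
      obtain ⟨m, hm⟩ := hd
      have hm1 : 1 ≤ m := by
        rcases Nat.eq_zero_or_pos m with h | h
        · subst h; simp at hm; omega
        · exact h
      rcases eq_or_lt_of_le hm1 with h | h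
      · rw [hm, ← h, mul_one, S_prime hp]
      · have hmn : m < n := by
          have := hp.two_le
          calc m < 2 * m := by omega
            _ ≤ n.minFac * m := Nat.mul_le_mul_right m this
            _ = n := hm.symm
        have := ih m hmn hm1
        rw [hm, S_mul (Nat.Prime.ne_zero hp) (by omega), S_prime hp]
        have h2m : 2 ≤ m := h
        calc n.minFac + S m ≤ n.minFac + m := by omega
          _ ≤ n.minFac * m := Nat.add_le_mul hp.two_le h2m

namespace Expr

lemma val_pos (t : Expr) : 1 ≤ t.val := by
  induction t with
  | one => simp [val]
  | add a b ha hb => simp [val]; omega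
  | mul a b ha hb => simpa [val] using Nat.one_le_iff_ne_zero.mpr (Nat.mul_ne_zero (by omega) (by omega))

lemma ones_pos (t : Expr) : 1 ≤ t.ones := by
  induction t with
  | one => simp [ones]
  | add a b ha hb => simp [ones]; omega
  | mul a b ha hb => simp [ones]; omega

lemma heightM_zero_val {t : Expr} (h : t.heightM = 0) : t.val = 1 := by
  induction t with
  | one => rfl
  | add a b ha hb => simp [heightM] at h
  | mul a b ha hb =>
    simp [heightM] at h
    simp [val, ha h.1, hb h.2]

lemma heightA_zero_val {t : Expr} (h : t.heightA = 0) : t.val = t.ones := by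
  induction t with
  | one => rfl
  | add a b ha hb =>
    simp [heightA] at h
    simp [val, ones, ha h.1, hb h.2]
  | mul a b ha hb => simp [heightA] at h

lemma heightA_le_one {t : Expr} (h : t.heightA ≤ 1) : t.val ≤ t.ones := by
  induction t with
  | one => simp [val, ones]
  | add a b ha hb =>
    simp [heightA] at h
    have := ha h.1; have := hb h.2
    simp [val, ones]; omega
  | mul a b ha hb =>
    simp [heightA] at h
    have h1 : a.heightM = 0 := by omega
    have h2 : b.heightM = 0 := by omega
    have := ones_pos a; have := ones_pos b
    simp [val, ones, heightM_zero_val h1, heightM_zero_val h2]; omega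

lemma heightM_le_one {t : Expr} (h : t.heightM ≤ 1) : S t.val ≤ t.ones := by
  induction t with
  | one => simp [val, ones, S_one]
  | add a b ha hb =>
    simp [heightM] at h
    have h1 : a.heightA = 0 := by omega
    have h2 : b.heightA = 0 := by omega
    have hva := heightA_zero_val h1
    have hvb := heightA_zero_val h2
    have hvp : 1 ≤ (Expr.add a b).val := val_pos _
    calc S (Expr.add a b).val ≤ (Expr.add a b).val := S_le _ hvp
      _ = (Expr.add a b).ones := by simp [val, ones, hva, hvb]
  | mul a b ha hb =>
    simp [heightM] at h
    have := ha h.1; have := hb h.2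
    have hva := val_pos a; have hvb := val_pos b
    simp only [val, ones]
    rw [S_mul (by omega) (by omega)]
    omega

lemma lower {t : Expr} (h : t.height ≤ 2) (hn : 1 < t.val) : S t.val ≤ t.ones := by
  cases t with
  | one => simp [val] at hn
  | add a b =>
    simp [height] at h
    have ha : a.heightA ≤ 1 := by omega
    have hb : b.heightA ≤ 1 := by omega
    have := heightA_le_one ha; have := heightA_le_one hb
    calc S (Expr.add a b).val ≤ (Expr.add a b).val := S_le _ (by omega)
      _ ≤ (Expr.add a b).ones := by simp [val, ones]; omega
  | mul a b =>
    simp [height] at h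
    have := heightM_le_one (t := a) (by omega)
    have := heightM_le_one (t := b) (by omega)
    have hva := val_pos a; have hvb := val_pos b
    simp only [val, ones]
    rw [S_mul (by omega) (by omega)]
    omega

/-- Sum of `m` ones. -/
def sumOnes : ℕ → Expr
  | 0 => one
  | 1 => one
  | (m+2) => add one (sumOnes (m+1))

lemma sumOnes_val (m : ℕ) (hm : 1 ≤ m) : (sumOnes m).val = m := by
  induction m with
  | zero => omega
  | succ k ih =>
    cases k with
    | zero => rfl
    | succ j => simp [sumOnes, val, ih (by omega)]; omega

lemma sumOnes_ones (m : ℕ) (hm : 1 ≤ m) : (sumOnes m).ones = m := by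
  induction m with
  | zero => omega
  | succ k ih =>
    cases k with
    | zero => rfl
    | succ j => simp [sumOnes, ones, ih (by omega)]; omega

lemma sumOnes_heightA (m : ℕ) : (sumOnes m).heightA = 0 := by
  induction m with
  | zero => rfl
  | succ k ih =>
    cases k with
    | zero => rfl
    | succ j => simp [sumOnes, heightA] at ih ⊢; exact ih

lemma sumOnes_heightM (m : ℕ) : (sumOnes m).heightM ≤ 1 := by
  cases m with
  | zero => simp [sumOnes, heightM]
  | succ k =>
    cases k with
    | zero => simp [sumOnes, heightM]
    | succ j =>
      simp [sumOnes, heightM]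
      have := sumOnes_heightA (j+1)
      simp [heightA] at this ⊢
      omega

lemma height_le_heightM (t : Expr) : t.height ≤ 1 + t.heightM := by
  cases t with
  | one => simp [height, heightM]
  | add a b => simp [height, heightM]
  | mul a b => simp [height, heightM]

end Expr

lemma exists_tree (n : ℕ) (hn : 2 ≤ n) :
    ∃ t : Expr, t.val = n ∧ t.ones = S n ∧ t.heightM ≤ 1 := by
  induction n using Nat.strong_induction_on with
  | _ n ih =>
    have hp : n.minFac.Prime := Nat.minFac_prime (by omega)
    obtain ⟨m, hm⟩ := Nat.minFac_dvd n
    have hm1 : 1 ≤ m := by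
      rcases Nat.eq_zero_or_pos m with h | h
      · subst h; simp at hm; omega
      · exact h
    rcases eq_or_lt_of_le hm1 with h | h
    · refine ⟨Expr.sumOnes n, Expr.sumOnes_val n (by omega), ?_, Expr.sumOnes_heightM n⟩
      rw [Expr.sumOnes_ones n (by omega)]
      have heq : n.minFac = n := by conv_rhs => rw [hm, ← h, mul_one]
      have hnp : n.Prime := Nat.prime_def_minFac.mpr ⟨hn, heq⟩
      rw [S_prime hnp]
    · have hmn : m < n := by
        calc m < 2 * m := by omega
          _ ≤ n.minFac * m := Nat.mul_le_mul_right m hp.two_le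
          _ = n := hm.symm
      obtain ⟨t, htv, hto, hth⟩ := ih m hmn h
      refine ⟨Expr.mul (Expr.sumOnes n.minFac) t, ?_, ?_, ?_⟩
      · simp [Expr.val, Expr.sumOnes_val n.minFac hp.one_le, htv, hm.symm]
      · have hS : S n = n.minFac + S m := by
          conv_lhs => rw [hm]
          rw [S_mul hp.ne_zero (by omega), S_prime hp]
        simp only [Expr.ones]
        rw [Expr.sumOnes_ones n.minFac hp.one_le, hto, hS]
      · simp [Expr.heightM]
        exact ⟨Expr.sumOnes_heightM _, hth⟩

theorem min_ones_height_le_two (n : ℕ) (hn : 1 < n) :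
    sInf {k | ∃ t : Expr, t.val = n ∧ t.height ≤ 2 ∧ t.ones = k} =
      n.factorization.sum (fun p e => p * e) := by
  have key : (n.factorization.sum fun p e => p * e) = S n := rfl
  rw [key]
  obtain ⟨t, htv, hto, hth⟩ := exists_tree n hn
  have hmem : S n ∈ {k | ∃ t : Expr, t.val = n ∧ t.height ≤ 2 ∧ t.ones = k} := by
    refine ⟨t, htv, ?_, hto⟩
    calc t.height ≤ 1 + t.heightM := Expr.height_le_heightM t
      _ ≤ 2 := by omega
  apply le_antisymm
  · exact Nat.sInf_le hmem
  · apply le_csInf ⟨_, hmem⟩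
    rintro k ⟨u, huv, huh, huo⟩
    rw [← huo, ← huv]
    exact Expr.lower huh (huv ▸ hn)
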